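/- arXiv:2602.14609 — 4 statements merged into one kernel-verified Lean document; each statement's English description precedes it below -/
import Mathlib

section
/- The map Φ₂(X) = X - M X Mᵀ with M = I - 𝟙𝟙ᵀ/n is the orthogonal projector of ℝ^{n×n} (with the Frobenius inner product ⟨X,Y⟩ = trace(YᵀX)) onto the subspace 𝒟 = {x𝟙ᵀ - 𝟙yᵀ : x,y ∈ ℝⁿ}: Φ₂(D) = D for D ∈ 𝒟, Φ₂(X) ∈ 𝒟 for all X, and ⟨X - Φ₂(X), D⟩ = 0 for all X and all D ∈ 𝒟. -/
open Matrix BigOperators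

def Delta {n : ℕ} (x y : Fin n → ℝ) : Matrix (Fin n) (Fin n) ℝ :=
  Matrix.of fun i j => x i - y j

def Dset (n : ℕ) : Set (Matrix (Fin n) (Fin n) ℝ) :=
  { D | ∃ x y : Fin n → ℝ, D = Delta x y }

noncomputable def Pmat (n : ℕ) : Matrix (Fin n) (Fin n) ℝ :=
  1 - (n : ℝ)⁻¹ • Matrix.vecMulVec (fun _ => 1) (fun _ => 1)


/-!
Write `J = 𝟙𝟙ᵀ`, so `M = 1 - J/n`. Since `M𝟙 = 0` and `M` is symmetric, `M` kills both
`x𝟙ᵀ` and `𝟙yᵀ` from the appropriate side, hence `M D Mᵀ = 0` for `D ∈ 𝒟`. Expanding,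
`X - MXM = JX/n + MXJ/n`, a sum of a matrix with constant columns and one with constant rows,
so it lies in `𝒟`. Finally `⟨MXM, D⟩ = ⟨X, MDM⟩ = 0` by symmetry of `M`.
-/

section

variable {n : ℕ}

lemma Pmat_transpose : (Pmat n)ᵀ = Pmat n := by
  simp [Pmat, transpose_vecMulVec]

lemma Pmat_mulVec_ones : Pmat n *ᵥ (fun _ => 1) = 0 := by
  ext i
  have hn : (n : ℝ) ≠ 0 := by exact_mod_cast i.pos.ne'
  simp [Pmat, sub_mulVec, smul_mulVec, vecMulVec_mulVec, dotProduct, hn]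

lemma ones_vecMul_Pmat : (fun _ => 1) ᵥ* Pmat n = 0 := by
  rw [← mulVec_transpose, Pmat_transpose, Pmat_mulVec_ones]

lemma Delta_eq_vecMulVec_sub_vecMulVec (x y : Fin n → ℝ) :
    Delta x y = vecMulVec x (fun _ => 1) - vecMulVec (fun _ => 1) y := by
  ext i j
  simp [Delta, vecMulVec_apply]

lemma Pmat_mul_Delta_mul_Pmat (x y : Fin n → ℝ) :
    Pmat n * Delta x y * Pmat n = 0 := by
  rw [Delta_eq_vecMulVec_sub_vecMulVec, Matrix.mul_sub, mul_vecMulVec, mul_vecMulVec,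
    Pmat_mulVec_ones, zero_vecMulVec, sub_zero, vecMulVec_mul, ones_vecMul_Pmat, vecMulVec_zero]

lemma sub_Pmat_mul_mul_Pmat_eq_Delta (X : Matrix (Fin n) (Fin n) ℝ) :
    X - Pmat n * X * Pmat n =
      Delta ((n : ℝ)⁻¹ • (Pmat n * X) *ᵥ (fun _ => 1)) (-((n : ℝ)⁻¹ • (fun _ => 1) ᵥ* X)) := by
  set J : Matrix (Fin n) (Fin n) ℝ := vecMulVec (fun _ => 1) (fun _ => 1)
  have hdecomp :
      X - Pmat n * X * Pmat n = (n : ℝ)⁻¹ • (J * X) + (n : ℝ)⁻¹ • (Pmat n * X * J) := by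
    simp only [Pmat, Matrix.sub_mul, Matrix.mul_sub, Matrix.smul_mul, Matrix.mul_smul,
      Matrix.one_mul, Matrix.mul_one]
    module
  rw [hdecomp, vecMulVec_mul, mul_vecMulVec, Delta_eq_vecMulVec_sub_vecMulVec, vecMulVec_neg,
    sub_neg_eq_add, vecMulVec_smul, smul_vecMulVec, add_comm]

end

theorem stmt9_general {n : ℕ} :
    (∀ D ∈ Dset n, D - Pmat n * D * (Pmat n)ᵀ = D) ∧
    (∀ X : Matrix (Fin n) (Fin n) ℝ, X - Pmat n * X * (Pmat n)ᵀ ∈ Dset n) ∧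
    (∀ X : Matrix (Fin n) (Fin n) ℝ, ∀ D ∈ Dset n,
      Matrix.trace (Dᵀ * (X - (X - Pmat n * X * (Pmat n)ᵀ))) = 0) := by
  simp only [Pmat_transpose, sub_sub_cancel]
  refine ⟨?_, fun X => ⟨_, _, sub_Pmat_mul_mul_Pmat_eq_Delta X⟩, ?_⟩
  · rintro D ⟨x, y, rfl⟩
    rw [Pmat_mul_Delta_mul_Pmat, sub_zero]
  · rintro X D ⟨x, y, rfl⟩
    calc trace ((Delta x y)ᵀ * (Pmat n * X * Pmat n))
        = trace ((Pmat n * Delta x y * Pmat n)ᵀ * X) := by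
          simp only [transpose_mul, Pmat_transpose, ← Matrix.mul_assoc]
          rw [trace_mul_comm]
          simp only [Matrix.mul_assoc]
      _ = 0 := by rw [Pmat_mul_Delta_mul_Pmat, transpose_zero, Matrix.zero_mul, trace_zero]

theorem stmt9 {n : ℕ} (hn : 0 < n) :
    (∀ D ∈ Dset n, D - Pmat n * D * (Pmat n)ᵀ = D) ∧
    (∀ X : Matrix (Fin n) (Fin n) ℝ, X - Pmat n * X * (Pmat n)ᵀ ∈ Dset n) ∧
    (∀ X : Matrix (Fin n) (Fin n) ℝ, ∀ D ∈ Dset n,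
      Matrix.trace (Dᵀ * (X - (X - Pmat n * X * (Pmat n)ᵀ))) = 0) :=
  stmt9_general
end

section
/- Let v, w ∈ ℝⁿ with 𝟙ᵀv = 𝟙ᵀw = 1, M_v = I - 𝟙vᵀ, M_w = I - 𝟙wᵀ, and let A have no zero entries. Then ‖M_v A^{[-1]} M_wᵀ‖_max ≤ ‖M_v‖_∞ ‖M_w‖_∞ · κ_max(A) and ‖M_v A^{[-1]} M_wᵀ‖_F ≤ ‖M_v‖_2 ‖M_w‖_2 · κ_F(A), where κ_⋆(A) = min_{X ∈ 𝒟} ‖A^{[-1]} - X‖_⋆. -/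
open Matrix BigOperators

noncomputable def frobNorm {n : ℕ} (A : Matrix (Fin n) (Fin n) ℝ) : ℝ :=
  Real.sqrt (∑ i, ∑ j, (A i j) ^ 2)

noncomputable def maxNorm {n : ℕ} (A : Matrix (Fin n) (Fin n) ℝ) : ℝ :=
  ⨆ i, ⨆ j, |A i j|

noncomputable def kappaF {n : ℕ} (A : Matrix (Fin n) (Fin n) ℝ) : ℝ :=
  ⨅ p : (Fin n → ℝ) × (Fin n → ℝ),
    frobNorm ((Matrix.of fun i j => (A i j)⁻¹) - Delta p.1 p.2)

noncomputable def kappaMax {n : ℕ} (A : Matrix (Fin n) (Fin n) ℝ) : ℝ :=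
  ⨅ p : (Fin n → ℝ) × (Fin n → ℝ),
    maxNorm ((Matrix.of fun i j => (A i j)⁻¹) - Delta p.1 p.2)

/-- maximum absolute row sum, i.e. the operator norm induced by the vector ∞-norm -/
noncomputable def linfNorm {n : ℕ} (M : Matrix (Fin n) (Fin n) ℝ) : ℝ :=
  ⨆ i, ∑ j, |M i j|

/-- spectral norm: supremum of the Euclidean norm of `M x` over the Euclidean unit ball -/
noncomputable def specNorm {n : ℕ} (M : Matrix (Fin n) (Fin n) ℝ) : ℝ :=
  sSup { r | ∃ x : Fin n → ℝ, (∑ i, (x i) ^ 2) ≤ 1 ∧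
    r = Real.sqrt (∑ i, (M.mulVec x i) ^ 2) }

/-! ### Auxiliary lemmas -/

section AuxLemmas
variable {n : ℕ}

lemma frobNorm_nonneg' (A : Matrix (Fin n) (Fin n) ℝ) : 0 ≤ frobNorm A :=
  Real.sqrt_nonneg _

lemma maxNorm_nonneg' (A : Matrix (Fin n) (Fin n) ℝ) : 0 ≤ maxNorm A :=
  Real.iSup_nonneg fun _ => Real.iSup_nonneg fun _ => abs_nonneg _

lemma abs_le_maxNorm' [Nonempty (Fin n)] (A : Matrix (Fin n) (Fin n) ℝ) (i j : Fin n) :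
    |A i j| ≤ maxNorm A := by
  refine le_trans (le_ciSup (f := fun j => |A i j|) (Set.Finite.bddAbove (Set.finite_range _)) j) ?_
  exact le_ciSup (f := fun i => ⨆ j, |A i j|) (Set.Finite.bddAbove (Set.finite_range _)) i

lemma maxNorm_le' [Nonempty (Fin n)] {c : ℝ} (A : Matrix (Fin n) (Fin n) ℝ)
    (h : ∀ i j, |A i j| ≤ c) : maxNorm A ≤ c :=
  ciSup_le fun i => ciSup_le fun j => h i j

lemma rowsum_le_linf' [Nonempty (Fin n)] (M : Matrix (Fin n) (Fin n) ℝ) (i : Fin n) :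
    (∑ j, |M i j|) ≤ linfNorm M :=
  le_ciSup (f := fun i => ∑ j, |M i j|) (Set.Finite.bddAbove (Set.finite_range _)) i

lemma linf_nonneg' (M : Matrix (Fin n) (Fin n) ℝ) : 0 ≤ linfNorm M :=
  Real.iSup_nonneg fun _ => Finset.sum_nonneg fun _ _ => abs_nonneg _

lemma maxNorm_triple' {lM lN mC : ℝ} (M C N : Matrix (Fin n) (Fin n) ℝ)
    (hM : ∀ i, (∑ j, |M i j|) ≤ lM) (hN : ∀ i, (∑ j, |N i j|) ≤ lN)
    (hC : ∀ i j, |C i j| ≤ mC) (hlM : 0 ≤ lM) (hlN : 0 ≤ lN) (hmC : 0 ≤ mC) :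
    ∀ i j, |(M * C * Nᵀ) i j| ≤ lM * lN * mC := by
  intro i j
  have h1 : |(M * C * Nᵀ) i j| ≤ ∑ l, ∑ k, |M i k| * |C k l| * |N j l| := by
    rw [Matrix.mul_apply]
    refine le_trans (Finset.abs_sum_le_sum_abs _ _) (Finset.sum_le_sum fun l _ => ?_)
    rw [Matrix.mul_apply, Matrix.transpose_apply, Finset.sum_mul]
    refine le_trans (Finset.abs_sum_le_sum_abs _ _) (Finset.sum_le_sum fun k _ => ?_)
    rw [abs_mul, abs_mul]
  refine le_trans h1 ?_
  have h2 : ∑ l, ∑ k, |M i k| * |C k l| * |N j l| ≤ ∑ l, ∑ k, |M i k| * mC * |N j l| := by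
    refine Finset.sum_le_sum fun l _ => Finset.sum_le_sum fun k _ =>
      mul_le_mul_of_nonneg_right (mul_le_mul_of_nonneg_left (hC k l) (abs_nonneg _)) (abs_nonneg _)
  refine le_trans h2 ?_
  have h3 : ∑ l, ∑ k, |M i k| * mC * |N j l| = (∑ k, |M i k|) * mC * (∑ l, |N j l|) := by
    calc ∑ l, ∑ k, |M i k| * mC * |N j l|
        = ∑ l, (∑ k, |M i k| * mC) * |N j l| :=
          Finset.sum_congr rfl fun l _ => by rw [Finset.sum_mul]
      _ = (∑ k, |M i k| * mC) * ∑ l, |N j l| := by rw [← Finset.mul_sum]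
      _ = (∑ k, |M i k|) * mC * ∑ l, |N j l| := by rw [← Finset.sum_mul]
  rw [h3]
  have hNs : 0 ≤ ∑ l, |N j l| := Finset.sum_nonneg fun _ _ => abs_nonneg _
  calc (∑ k, |M i k|) * mC * (∑ l, |N j l|) ≤ lM * mC * lN := by
        have h4 : (∑ k, |M i k|) * mC ≤ lM * mC := mul_le_mul_of_nonneg_right (hM i) hmC
        exact mul_le_mul h4 (hN j) hNs (mul_nonneg hlM hmC)
    _ = lM * lN * mC := by ring

lemma spec_bdd (M : Matrix (Fin n) (Fin n) ℝ) :
    BddAbove { r | ∃ x : Fin n → ℝ, (∑ i, (x i) ^ 2) ≤ 1 ∧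
      r = Real.sqrt (∑ i, (M.mulVec x i) ^ 2) } := by
  refine ⟨Real.sqrt (∑ i, ∑ j, (M i j) ^ 2), ?_⟩
  rintro r ⟨x, hx, rfl⟩
  refine Real.sqrt_le_sqrt ?_
  have h1 : ∀ i, (M.mulVec x i) ^ 2 ≤ (∑ j, (M i j) ^ 2) * ∑ j, (x j) ^ 2 := fun i => by
    simpa [Matrix.mulVec, dotProduct] using Finset.sum_mul_sq_le_sq_mul_sq Finset.univ (M i) x
  calc ∑ i, (M.mulVec x i) ^ 2 ≤ ∑ i, (∑ j, (M i j) ^ 2) * ∑ j, (x j) ^ 2 :=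
        Finset.sum_le_sum fun i _ => h1 i
    _ = (∑ i, ∑ j, (M i j) ^ 2) * ∑ j, (x j) ^ 2 := by rw [← Finset.sum_mul]
    _ ≤ ∑ i, ∑ j, (M i j) ^ 2 := by
        refine mul_le_of_le_one_right ?_ hx
        exact Finset.sum_nonneg fun _ _ => Finset.sum_nonneg fun _ _ => sq_nonneg _

lemma spec_nonneg' (M : Matrix (Fin n) (Fin n) ℝ) : 0 ≤ specNorm M := by
  have h0 : (0 : ℝ) ∈ { r | ∃ x : Fin n → ℝ, (∑ i, (x i) ^ 2) ≤ 1 ∧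
      r = Real.sqrt (∑ i, (M.mulVec x i) ^ 2) } := by
    refine ⟨0, by simp, ?_⟩
    simp [Matrix.mulVec_zero]
  exact le_csSup (spec_bdd M) h0

lemma le_spec' (M : Matrix (Fin n) (Fin n) ℝ) (x : Fin n → ℝ)
    (hx : (∑ i, (x i) ^ 2) ≤ 1) :
    Real.sqrt (∑ i, (M.mulVec x i) ^ 2) ≤ specNorm M :=
  le_csSup (spec_bdd M) ⟨x, hx, rfl⟩

lemma mulVec_sq_le' (M : Matrix (Fin n) (Fin n) ℝ) (x : Fin n → ℝ) :
    (∑ i, (M.mulVec x i) ^ 2) ≤ (specNorm M) ^ 2 * ∑ i, (x i) ^ 2 := by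
  set t := Real.sqrt (∑ i, (x i) ^ 2) with ht
  have hxs : 0 ≤ ∑ i, (x i) ^ 2 := Finset.sum_nonneg fun _ _ => sq_nonneg _
  have ht2 : t ^ 2 = ∑ i, (x i) ^ 2 := Real.sq_sqrt hxs
  rcases eq_or_lt_of_le (Real.sqrt_nonneg (∑ i, (x i) ^ 2)) with h | h
  · have ht0 : t = 0 := ht.trans h.symm
    have hx0 : ∑ i, (x i) ^ 2 = 0 := by rw [← ht2, ht0]; norm_num
    have hxz : ∀ i, x i = 0 := by
      intro i
      have := (Finset.sum_eq_zero_iff_of_nonneg (fun i _ => sq_nonneg (x i))).1 hx0 i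
        (Finset.mem_univ i)
      exact pow_eq_zero_iff (n := 2) (by norm_num) |>.1 this
    have hxe : x = 0 := funext hxz
    subst hxe
    simp [Matrix.mulVec_zero]
  · have ht0 : 0 < t := h
    set u : Fin n → ℝ := fun i => t⁻¹ * x i with hu
    have hus : ∑ i, (u i) ^ 2 = 1 := by
      simp only [hu, mul_pow, ← Finset.mul_sum]
      rw [← ht2]
      field_simp
    have hMu : ∀ i, M.mulVec u i = t⁻¹ * M.mulVec x i := by
      intro i
      simp only [Matrix.mulVec, dotProduct, hu]
      rw [Finset.mul_sum]
      exact Finset.sum_congr rfl fun j _ => by ring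
    have hsum : ∑ i, (M.mulVec u i) ^ 2 = t⁻¹ ^ 2 * ∑ i, (M.mulVec x i) ^ 2 := by
      rw [Finset.mul_sum]
      exact Finset.sum_congr rfl fun i _ => by rw [hMu i]; ring
    have hle : Real.sqrt (∑ i, (M.mulVec u i) ^ 2) ≤ specNorm M :=
      le_spec' M u (le_of_eq hus)
    have hMs : 0 ≤ ∑ i, (M.mulVec u i) ^ 2 := Finset.sum_nonneg fun _ _ => sq_nonneg _
    have hsq : ∑ i, (M.mulVec u i) ^ 2 ≤ (specNorm M) ^ 2 := by
      nlinarith [Real.sq_sqrt hMs, Real.sqrt_nonneg (∑ i, (M.mulVec u i) ^ 2), spec_nonneg' M]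
    rw [hsum] at hsq
    calc ∑ i, (M.mulVec x i) ^ 2 = t ^ 2 * (t⁻¹ ^ 2 * ∑ i, (M.mulVec x i) ^ 2) := by
          field_simp
      _ ≤ t ^ 2 * (specNorm M) ^ 2 := mul_le_mul_of_nonneg_left hsq (sq_nonneg t)
      _ = (specNorm M) ^ 2 * ∑ i, (x i) ^ 2 := by rw [ht2]; ring

lemma frob_mul_le' (M C : Matrix (Fin n) (Fin n) ℝ) :
    frobNorm (M * C) ≤ specNorm M * frobNorm C := by
  have key : ∑ i, ∑ j, ((M * C) i j) ^ 2 ≤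
      (specNorm M) ^ 2 * ∑ i, ∑ j, (C i j) ^ 2 := by
    rw [Finset.sum_comm]
    have h1 : ∀ j, ∑ i, ((M * C) i j) ^ 2 ≤ (specNorm M) ^ 2 * ∑ k, (C k j) ^ 2 := by
      intro j
      have hb := mulVec_sq_le' M (fun k => C k j)
      have he : ∀ i, (M * C) i j = M.mulVec (fun k => C k j) i := fun i => by
        simp [Matrix.mul_apply, Matrix.mulVec, dotProduct]
      calc ∑ i, ((M * C) i j) ^ 2 = ∑ i, (M.mulVec (fun k => C k j) i) ^ 2 :=
            Finset.sum_congr rfl fun i _ => by rw [he i]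
        _ ≤ (specNorm M) ^ 2 * ∑ k, (C k j) ^ 2 := hb
    calc ∑ j, ∑ i, ((M * C) i j) ^ 2 ≤ ∑ j, (specNorm M) ^ 2 * ∑ k, (C k j) ^ 2 :=
          Finset.sum_le_sum fun j _ => h1 j
      _ = (specNorm M) ^ 2 * ∑ j, ∑ k, (C k j) ^ 2 := by rw [← Finset.mul_sum]
      _ = (specNorm M) ^ 2 * ∑ k, ∑ j, (C k j) ^ 2 := by rw [Finset.sum_comm]
  calc frobNorm (M * C) ≤
        Real.sqrt ((specNorm M) ^ 2 * ∑ i, ∑ j, (C i j) ^ 2) := Real.sqrt_le_sqrt key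
    _ = specNorm M * frobNorm C := by
        rw [frobNorm, Real.sqrt_mul (sq_nonneg _), Real.sqrt_sq (spec_nonneg' M)]

lemma frob_transpose' (A : Matrix (Fin n) (Fin n) ℝ) : frobNorm Aᵀ = frobNorm A := by
  unfold frobNorm
  rw [Finset.sum_comm]
  simp [Matrix.transpose_apply]

lemma frob_mul_transpose' (C N : Matrix (Fin n) (Fin n) ℝ) :
    frobNorm (C * Nᵀ) ≤ specNorm N * frobNorm C := by
  calc frobNorm (C * Nᵀ) = frobNorm ((C * Nᵀ)ᵀ) := (frob_transpose' _).symm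
    _ = frobNorm (N * Cᵀ) := by rw [Matrix.transpose_mul, Matrix.transpose_transpose]
    _ ≤ specNorm N * frobNorm Cᵀ := frob_mul_le' N Cᵀ
    _ = specNorm N * frobNorm C := by rw [frob_transpose']

lemma kill' (M N : Matrix (Fin n) (Fin n) ℝ) (x y : Fin n → ℝ)
    (hM : ∀ i, ∑ k, M i k = 0) (hN : ∀ i, ∑ k, N i k = 0) :
    M * Delta x y * Nᵀ = 0 := by
  ext i j
  rw [Matrix.mul_apply]
  have h1 : ∀ l, (M * Delta x y) i l = ∑ k, M i k * x k := by
    intro l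
    rw [Matrix.mul_apply]
    have hsplit : ∑ k, M i k * (x k - y l) = ∑ k, (M i k * x k - M i k * y l) :=
      Finset.sum_congr rfl fun k _ => by ring
    rw [show (∑ k, M i k * Delta x y k l) = ∑ k, M i k * (x k - y l) from rfl,
      hsplit, Finset.sum_sub_distrib, ← Finset.sum_mul, hM i, zero_mul, sub_zero]
  calc ∑ l, (M * Delta x y) i l * Nᵀ l j
      = ∑ l, (∑ k, M i k * x k) * N j l :=
        Finset.sum_congr rfl fun l _ => by rw [h1 l, Matrix.transpose_apply]
    _ = (∑ k, M i k * x k) * ∑ l, N j l := by rw [← Finset.mul_sum]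
    _ = 0 := by rw [hN j, mul_zero]

lemma rowsum_zero' (v : Fin n → ℝ) (hv : (∑ i, v i) = 1) (i : Fin n) :
    ∑ k, (1 - Matrix.vecMulVec (fun _ : Fin n => (1 : ℝ)) v) i k = 0 := by
  have h : ∀ k, (1 - Matrix.vecMulVec (fun _ : Fin n => (1 : ℝ)) v) i k
      = (if i = k then (1:ℝ) else 0) - v k := by
    intro k
    simp [Matrix.sub_apply, Matrix.vecMulVec_apply, Matrix.one_apply]
  rw [Finset.sum_congr rfl fun k _ => h k, Finset.sum_sub_distrib, hv]
  simp

lemma le_mul_ciInf' {ι : Type*} [Nonempty ι] {c v : ℝ} {f : ι → ℝ} (hc : 0 ≤ c)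
    (h : ∀ i, v ≤ c * f i) : v ≤ c * ⨅ i, f i := by
  rcases eq_or_lt_of_le hc with h0 | h0
  · have hv := h (Classical.arbitrary ι)
    rw [← h0] at hv ⊢
    simpa using hv
  · have h1 : v / c ≤ ⨅ i, f i :=
      le_ciInf fun i => (div_le_iff₀ h0).mpr (by have := h i; linarith)
    have h2 := (div_le_iff₀ h0).mp h1
    linarith [h2]

end AuxLemmas

theorem stmt11 {n : ℕ} (v w : Fin n → ℝ) (hv : (∑ i, v i) = 1) (hw : (∑ i, w i) = 1)
    (A : Matrix (Fin n) (Fin n) ℝ) (hA : ∀ i j, A i j ≠ 0) :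
    maxNorm ((1 - Matrix.vecMulVec (fun _ : Fin n => (1 : ℝ)) v) * (Matrix.of fun i j => (A i j)⁻¹) *
        (1 - Matrix.vecMulVec (fun _ : Fin n => (1 : ℝ)) w)ᵀ) ≤
      linfNorm (1 - Matrix.vecMulVec (fun _ : Fin n => (1 : ℝ)) v) *
        linfNorm (1 - Matrix.vecMulVec (fun _ : Fin n => (1 : ℝ)) w) * kappaMax A ∧
    frobNorm ((1 - Matrix.vecMulVec (fun _ : Fin n => (1 : ℝ)) v) * (Matrix.of fun i j => (A i j)⁻¹) *
        (1 - Matrix.vecMulVec (fun _ : Fin n => (1 : ℝ)) w)ᵀ) ≤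
      specNorm (1 - Matrix.vecMulVec (fun _ : Fin n => (1 : ℝ)) v) *
        specNorm (1 - Matrix.vecMulVec (fun _ : Fin n => (1 : ℝ)) w) * kappaF A := by
  set Mv := (1 - Matrix.vecMulVec (fun _ : Fin n => (1 : ℝ)) v) with hMv
  set Mw := (1 - Matrix.vecMulVec (fun _ : Fin n => (1 : ℝ)) w) with hMw
  set R : Matrix (Fin n) (Fin n) ℝ := Matrix.of fun i j => (A i j)⁻¹ with hR
  have hMvr : ∀ i, ∑ k, Mv i k = 0 := rowsum_zero' v hv
  have hMwr : ∀ i, ∑ k, Mw i k = 0 := rowsum_zero' w hw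
  have hkm : kappaMax A = ⨅ p : (Fin n → ℝ) × (Fin n → ℝ),
      maxNorm (R - Delta p.1 p.2) := by rw [hR]; rfl
  have hkf : kappaF A = ⨅ p : (Fin n → ℝ) × (Fin n → ℝ),
      frobNorm (R - Delta p.1 p.2) := by rw [hR]; rfl
  clear_value Mv Mw R
  have hrw : ∀ p : (Fin n → ℝ) × (Fin n → ℝ),
      Mv * R * Mwᵀ = Mv * (R - Delta p.1 p.2) * Mwᵀ := by
    intro p
    have hz : Mv * Delta p.1 p.2 * Mwᵀ = 0 := kill' Mv Mw p.1 p.2 hMvr hMwr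
    rw [Matrix.mul_sub, Matrix.sub_mul, hz, sub_zero]
  constructor
  · -- maxNorm part
    rcases isEmpty_or_nonempty (Fin n) with hE | hNE
    · have hLHS : maxNorm (Mv * R * Mwᵀ) = 0 := Real.iSup_of_isEmpty _
      have hk : kappaMax A = 0 := by
        unfold kappaMax
        have : ∀ p : (Fin n → ℝ) × (Fin n → ℝ),
            maxNorm ((Matrix.of fun i j => (A i j)⁻¹) - Delta p.1 p.2) = 0 :=
          fun p => Real.iSup_of_isEmpty _
        rw [iInf_congr this]
        exact ciInf_const
      rw [hLHS, hk, mul_zero]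
    · rw [hkm]
      refine le_mul_ciInf' (mul_nonneg (linf_nonneg' Mv) (linf_nonneg' Mw)) fun p => ?_
      rw [hrw p]
      have hb := maxNorm_triple' (lM := linfNorm Mv) (lN := linfNorm Mw)
        (mC := maxNorm (R - Delta p.1 p.2)) Mv (R - Delta p.1 p.2) Mw
        (rowsum_le_linf' Mv) (rowsum_le_linf' Mw)
        (abs_le_maxNorm' _) (linf_nonneg' Mv) (linf_nonneg' Mw) (maxNorm_nonneg' _)
      exact maxNorm_le' _ hb
  · -- frobNorm part
    rw [hkf]
    refine le_mul_ciInf' (mul_nonneg (spec_nonneg' Mv) (spec_nonneg' Mw)) fun p => ?_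
    rw [hrw p]
    calc frobNorm (Mv * (R - Delta p.1 p.2) * Mwᵀ)
        = frobNorm (Mv * ((R - Delta p.1 p.2) * Mwᵀ)) := by rw [Matrix.mul_assoc]
      _ ≤ specNorm Mv * frobNorm ((R - Delta p.1 p.2) * Mwᵀ) := frob_mul_le' _ _
      _ ≤ specNorm Mv * (specNorm Mw * frobNorm (R - Delta p.1 p.2)) :=
          mul_le_mul_of_nonneg_left (frob_mul_transpose' _ _) (spec_nonneg' Mv)
      _ = specNorm Mv * specNorm Mw * frobNorm (R - Delta p.1 p.2) := by ring
end

section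
/- For M = I - 𝟙e₁ᵀ ∈ ℝ^{n×n}, one has M Mᵀ = diag(0, S) up to block structure with S = I_{n-1} + 𝟙_{n-1}𝟙_{n-1}ᵀ, the spectral radius of S equals n, and consequently ‖M‖₂ = √n. -/
open Matrix BigOperators

/-- M = I - 𝟙e₁ᵀ, of size (n+2) × (n+2) -/
def M14 (n : ℕ) : Matrix (Fin (n + 2)) (Fin (n + 2)) ℝ :=
  1 - Matrix.vecMulVec (fun _ => 1) (fun j => if j = 0 then 1 else 0)

/-- S = I + 𝟙𝟙ᵀ, of size (n+1) × (n+1) -/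
def S14 (n : ℕ) : Matrix (Fin (n + 1)) (Fin (n + 1)) ℝ :=
  1 + Matrix.vecMulVec (fun _ => 1) (fun _ => 1)

/-!
Since `M x = x - x₀ 𝟙`, the rows of `M` are `eᵢ - e₀`, which gives `M Mᵀ` entrywise.
Since `S v = v + (∑ vᵢ) 𝟙`, an eigenvector of `S` either sums to zero (eigenvalue `1`) or is
constant (eigenvalue `n + 2`). For the norm, `‖x - x₀ 𝟙‖² ≤ (n + 2) ‖x‖²` holds termwise by a
weighted AM-GM inequality, with equality at `x = (-(n + 1), 1, …, 1)`.
-/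

namespace Matrix

section

variable {ι R : Type*} [DecidableEq ι] [CommRing R] (i₀ : ι)

theorem one_sub_vecMulVec_one_single_apply (i j : ι) :
    (1 - vecMulVec (fun _ => 1) (fun j => if j = i₀ then 1 else 0) : Matrix ι ι R) i j =
      (if i = j then 1 else 0) - if j = i₀ then 1 else 0 := by
  simp [one_apply, vecMulVec_apply]

variable [Fintype ι]

theorem one_sub_vecMulVec_one_single_mulVec (x : ι → R) :
    (1 - vecMulVec (fun _ => 1) (fun j => if j = i₀ then 1 else 0) : Matrix ι ι R) *ᵥ x =
      fun i => x i - x i₀ := by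
  ext i
  simp [sub_mulVec, vecMulVec_mulVec, dotProduct]

theorem one_sub_vecMulVec_one_single_mul_transpose_apply (i j : ι) :
    ((1 - vecMulVec (fun _ => 1) (fun j => if j = i₀ then 1 else 0)) *
        (1 - vecMulVec (fun _ => 1) (fun j => if j = i₀ then 1 else 0))ᵀ : Matrix ι ι R) i j =
      if i = i₀ ∨ j = i₀ then 0 else if i = j then 2 else 1 := by
  set A : Matrix ι ι R := 1 - vecMulVec (fun _ => 1) (fun j => if j = i₀ then 1 else 0) with hA
  change (A *ᵥ fun k => A j k) i = _
  simp only [hA, one_sub_vecMulVec_one_single_mulVec, one_sub_vecMulVec_one_single_apply]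
  grind

end

section

variable {ι K : Type*} [Fintype ι] [DecidableEq ι] [Field K]

theorem mem_spectrum_iff_exists_mulVec_eq_smul {A : Matrix ι ι K} {μ : K} :
    μ ∈ spectrum K A ↔ ∃ v, v ≠ 0 ∧ A *ᵥ v = μ • v := by
  rw [← spectrum_toLin', ← Module.End.hasEigenvalue_iff_mem_spectrum]
  constructor
  · intro h
    obtain ⟨v, hv, hv0⟩ := h.exists_hasEigenvector
    exact ⟨v, hv0, by simpa using Module.End.mem_eigenspace_iff.1 hv⟩
  · rintro ⟨v, hv0, hv⟩
    exact Module.End.hasEigenvalue_of_hasEigenvector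
      ⟨Module.End.mem_eigenspace_iff.2 (by simpa using hv), hv0⟩

theorem one_add_vecMulVec_one_one_mulVec (v : ι → K) :
    (1 + vecMulVec (fun _ => 1) (fun _ => 1) : Matrix ι ι K) *ᵥ v = v + fun _ => ∑ i, v i := by
  ext i
  simp [add_mulVec, vecMulVec_mulVec, dotProduct]

theorem card_add_one_mem_spectrum_one_add_vecMulVec_one_one [Nonempty ι] :
    (Fintype.card ι + 1 : K) ∈
      spectrum K (1 + vecMulVec (fun _ => 1) (fun _ => 1) : Matrix ι ι K) := by
  refine mem_spectrum_iff_exists_mulVec_eq_smul.2 ⟨fun _ => 1, ?_, ?_⟩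
  · exact Function.ne_iff.2 ⟨Classical.arbitrary ι, one_ne_zero⟩
  · ext i
    simp [one_add_vecMulVec_one_one_mulVec, add_comm]

theorem spectrum_one_add_vecMulVec_one_one_subset :
    spectrum K (1 + vecMulVec (fun _ => 1) (fun _ => 1) : Matrix ι ι K) ⊆
      {1, (Fintype.card ι + 1 : K)} := by
  intro μ hμ
  obtain ⟨v, hv0, hv⟩ := mem_spectrum_iff_exists_mulVec_eq_smul.1 hμ
  rw [one_add_vecMulVec_one_one_mulVec] at hv
  set s := ∑ i, v i
  have hcoord : ∀ i, (μ - 1) * v i = s := fun i => by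
    have := congrFun hv i
    simp only [Pi.add_apply, Pi.smul_apply, smul_eq_mul] at this
    linear_combination -this
  have hsum : (μ - 1) * s = Fintype.card ι * s := by
    rw [Finset.mul_sum, Finset.sum_congr rfl fun i _ => hcoord i, Finset.sum_const,
      Finset.card_univ, nsmul_eq_mul]
  by_cases hs : s = 0
  · obtain ⟨i, hi⟩ := Function.ne_iff.1 hv0
    have := hcoord i
    rw [hs, mul_eq_zero, sub_eq_zero] at this
    exact Or.inl (this.resolve_right hi)
  · refine Or.inr (show μ = _ from ?_)
    linear_combination mul_right_cancel₀ hs hsum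

end

end Matrix

theorem sum_sq_sub_le {ι : Type*} (s : Finset ι) (x : ι → ℝ) (c : ℝ) :
    ∑ i ∈ s, (x i - c) ^ 2 ≤ (s.card + 1) * (∑ i ∈ s, x i ^ 2 + c ^ 2) := by
  rcases s.eq_empty_or_nonempty with rfl | hs
  · simp [sq_nonneg]
  set m : ℝ := (s.card : ℝ)
  have hm : 0 < m := by simpa [m] using hs.card_pos
  -- weighted AM-GM: `m (m + 1) a² + (m + 1) c² = m (a - c)² + (m a + c)²`
  have hterm : ∀ i ∈ s, m * (x i - c) ^ 2 ≤ m * (m + 1) * x i ^ 2 + (m + 1) * c ^ 2 :=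
    fun i _ => by nlinarith [sq_nonneg (m * x i + c)]
  refine le_of_mul_le_mul_left ?_ hm
  calc m * ∑ i ∈ s, (x i - c) ^ 2 ≤ ∑ i ∈ s, (m * (m + 1) * x i ^ 2 + (m + 1) * c ^ 2) := by
        rw [Finset.mul_sum]; exact Finset.sum_le_sum hterm
    _ = m * ((m + 1) * (∑ i ∈ s, x i ^ 2 + c ^ 2)) := by
        rw [Finset.sum_add_distrib, ← Finset.mul_sum, Finset.sum_const, nsmul_eq_mul]; ring

theorem specNorm_eq_of_sum_sq_mulVec_le {n : ℕ} (M : Matrix (Fin n) (Fin n) ℝ) {C : ℝ}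
    (hC : 0 ≤ C) (hle : ∀ x, ∑ i, (M *ᵥ x) i ^ 2 ≤ C ^ 2 * ∑ i, x i ^ 2)
    {x₀ : Fin n → ℝ} (hx₀ : x₀ ≠ 0) (heq : ∑ i, (M *ᵥ x₀) i ^ 2 = C ^ 2 * ∑ i, x₀ i ^ 2) :
    specNorm M = C := by
  refine IsGreatest.csSup_eq ⟨?_, ?_⟩
  · set r := ∑ i, x₀ i ^ 2
    have hr : 0 < r := by
      obtain ⟨i, hi⟩ := Function.ne_iff.1 hx₀
      have hi : x₀ i ≠ 0 := hi
      exact lt_of_lt_of_le (by positivity) (Finset.single_le_sum (fun j _ => sq_nonneg (x₀ j))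
        (Finset.mem_univ i))
    have hsq : ∀ y : Fin n → ℝ, ∑ i, ((√r)⁻¹ • y) i ^ 2 = (∑ i, y i ^ 2) / r := fun y => by
      simp only [Pi.smul_apply, smul_eq_mul, mul_pow, inv_pow, Real.sq_sqrt hr.le, ← Finset.mul_sum]
      ring
    refine ⟨(√r)⁻¹ • x₀, by rw [hsq, div_self hr.ne'], ?_⟩
    rw [mulVec_smul, hsq, heq, mul_div_assoc, div_self hr.ne', mul_one, Real.sqrt_sq hC]
  · rintro _ ⟨x, hx, rfl⟩
    calc √(∑ i, (M *ᵥ x) i ^ 2) ≤ √(C ^ 2) :=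
          Real.sqrt_le_sqrt ((hle x).trans (mul_le_of_le_one_right (sq_nonneg C) hx))
      _ = C := Real.sqrt_sq hC

theorem sum_sq_sub_apply_zero_le {n : ℕ} (x : Fin (n + 1) → ℝ) :
    ∑ i, (x i - x 0) ^ 2 ≤ (n + 1) * ∑ i, x i ^ 2 := by
  have h := sum_sq_sub_le Finset.univ (fun i : Fin n => x i.succ) (x 0)
  rw [Finset.card_univ, Fintype.card_fin] at h
  rw [Fin.sum_univ_succ, Fin.sum_univ_succ (fun i => x i ^ 2), sub_self]
  linarith

theorem specNorm_M14 (n : ℕ) : specNorm (M14 n) = √(n + 2) := by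
  have hsq : √((n : ℝ) + 2) ^ 2 = n + 2 := Real.sq_sqrt (by positivity)
  have hmulVec : ∀ x, M14 n *ᵥ x = fun i => x i - x 0 :=
    one_sub_vecMulVec_one_single_mulVec 0
  set v : Fin (n + 2) → ℝ := fun i => if i = 0 then -(n + 1) else 1
  refine specNorm_eq_of_sum_sq_mulVec_le _ (Real.sqrt_nonneg _) (fun x => ?_)
    (x₀ := v) (Function.ne_iff.2 ⟨1, by simp [v]⟩) ?_
  · rw [hsq, hmulVec]
    exact_mod_cast sum_sq_sub_apply_zero_le x
  · rw [hsq, hmulVec, Fin.sum_univ_succ, Fin.sum_univ_succ (fun i => v i ^ 2)]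
    simp only [v, ↓reduceIte, Fin.succ_ne_zero, sub_self, ne_eq, OfNat.ofNat_ne_zero,
      not_false_eq_true, zero_pow, zero_add, Finset.sum_const, Finset.card_univ,
      Fintype.card_fin, nsmul_eq_mul, Nat.cast_add, Nat.cast_one, one_pow, mul_one]
    ring

theorem stmt14 (n : ℕ) :
    (∀ i j, (M14 n * (M14 n)ᵀ) i j =
      if i = 0 ∨ j = 0 then 0 else if i = j then 2 else 1) ∧
    ((n + 2 : ℝ) ∈ spectrum ℝ (S14 n)) ∧
    (∀ μ ∈ spectrum ℝ (S14 n), |μ| ≤ (n + 2 : ℝ)) ∧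
    specNorm (M14 n) = Real.sqrt (n + 2) := by
  have hcard : (Fintype.card (Fin (n + 1)) + 1 : ℝ) = n + 2 := by
    rw [Fintype.card_fin]; push_cast; ring
  refine ⟨one_sub_vecMulVec_one_single_mul_transpose_apply 0, ?_, fun μ hμ => ?_,
    specNorm_M14 n⟩
  · rw [← hcard]
    exact card_add_one_mem_spectrum_one_add_vecMulVec_one_one
  · rcases spectrum_one_add_vecMulVec_one_one_subset hμ with rfl | rfl
    · rw [abs_one]; linarith
    · rw [hcard, abs_of_nonneg (by positivity)]
end

section
/- Let A ∈ ℝ^{n×n} with no zero entries, Z = A^{[-1]}, and let x𝟙ᵀ - 𝟙yᵀ = Z - M_{e₁} Z M_{e₁}ᵀ (i.e., the output of Algorithm 1). Then the residual Z - (x𝟙ᵀ - 𝟙yᵀ) equals, in its trailing (n-1)×(n-1) block, the Schur complement of the leading 2×2 block [[0,1],[1,1]] in the bordered matrix Ẑ = [[0, 𝟙ᵀ],[𝟙, Z]], and is zero elsewhere. -/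
open Matrix BigOperators

/-- entrywise reciprocal -/
noncomputable def Zinv {n : ℕ} (A : Matrix (Fin n) (Fin n) ℝ) :
    Matrix (Fin n) (Fin n) ℝ :=
  Matrix.of fun i j => (A i j)⁻¹

/-- M_{e₁} = I - 𝟙e₁ᵀ -/
def Me1 (n : ℕ) : Matrix (Fin (n + 1)) (Fin (n + 1)) ℝ :=
  1 - Matrix.vecMulVec (fun _ => 1) (fun j => if j = 0 then 1 else 0)

/-- the [𝟙 v] block of the bordered matrix Ẑ (first column all ones, second column Z·e₁) -/
def Z21 {n : ℕ} (Z : Matrix (Fin (n + 1)) (Fin (n + 1)) ℝ) :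
    Matrix (Fin (n + 1)) (Fin 2) ℝ :=
  Matrix.of fun i k => if k = 0 then 1 else Z i 0

/-- the [𝟙 w]ᵀ block of the bordered matrix Ẑ (first row all ones, second row e₁ᵀZ) -/
def Z12 {n : ℕ} (Z : Matrix (Fin (n + 1)) (Fin (n + 1)) ℝ) :
    Matrix (Fin 2) (Fin (n + 1)) ℝ :=
  Matrix.of fun k j => if k = 0 then 1 else Z 0 j

theorem stmt15 {n : ℕ} (A : Matrix (Fin (n + 1)) (Fin (n + 1)) ℝ)
    (hA : ∀ i j, A i j ≠ 0) (h1 : A 0 0 = 1) :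
    ∀ i j,
      (Zinv A - (Zinv A - Me1 n * Zinv A * (Me1 n)ᵀ)) i j =
        if i = 0 ∨ j = 0 then 0
        else (Zinv A - Z21 (Zinv A) * (!![(0 : ℝ), 1; 1, 1])⁻¹ * Z12 (Zinv A)) i j := by
  intro i j
  have hZ : Zinv A 0 0 = 1 := by simp [Zinv, h1]
  have hinv : (!![(0 : ℝ), 1; 1, 1])⁻¹ = !![-1, 1; 1, 0] := by
    rw [Matrix.inv_def]
    norm_num [Matrix.adjugate_fin_two, Matrix.det_fin_two_of]
  have hL : (Me1 n * Zinv A * (Me1 n)ᵀ) i j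
      = Zinv A i j - Zinv A 0 j - Zinv A i 0 + Zinv A 0 0 := by
    rw [Me1]
    simp [Matrix.mul_apply, Matrix.sub_apply, Matrix.vecMulVec_apply, Matrix.one_apply,
      Matrix.transpose_apply, sub_mul, mul_sub, Finset.sum_sub_distrib, Finset.sum_ite_eq,
      Finset.mul_sum, Finset.sum_mul, mul_ite, ite_mul]
    ring
  have hR : (Z21 (Zinv A) * (!![(0 : ℝ), 1; 1, 1])⁻¹ * Z12 (Zinv A)) i j
      = Zinv A i 0 - 1 + Zinv A 0 j := by
    rw [hinv]
    simp [Z21, Z12, Matrix.mul_apply, Fin.sum_univ_two, Fin.sum_univ_succ]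
    ring
  simp only [Matrix.sub_apply, hL, hR]
  split_ifs with h
  · rcases h with h | h <;> subst h <;> rw [hZ] <;> ring
  · push_neg at h
    rw [hZ]; ring
end
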